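/- arXiv:1610.04099 — 2 statements merged into one kernel-verified Lean document; each statement's English description precedes it below -/
import Mathlib

section
/- Let G = ⟨f₁,…,fₙ⟩ ≤ Homeo⁺(ℝ) be an n-chain group (n ≥ 2) whose action is minimal, i.e., for every point p in supp G the orbit G·p is dense in supp G. Then the commutator subgroup G′ is a simple group, and every nontrivial normal subgroup of G contains G′ (equivalently, every proper quotient of G is abelian). -/
/-- The group of orientation-preserving homeomorphisms of `ℝ`,
realized as order-automorphisms of `ℝ`. -/
abbrev HomeoR := ℝ ≃o ℝ

/-- The support of a homeomorphism of `ℝ`. -/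
def supp (f : HomeoR) : Set ℝ := {x : ℝ | f x ≠ x}

/-- The support of a subgroup of `Homeo⁺(ℝ)`. -/
def suppG (G : Subgroup HomeoR) : Set ℝ := ⋃ g ∈ G, supp g

/-- The open interval in `ℝ` with `EReal` endpoints. -/
def eIoo (a b : EReal) : Set ℝ := {t : ℝ | a < (t : EReal) ∧ (t : EReal) < b}

/-- `a b : Fin n → EReal` are the endpoints of an `n`-chain of intervals. -/
def IsChainOfIntervals {n : ℕ} (a b : Fin n → EReal) : Prop :=
  (∀ i, a i < b i) ∧
  (∀ (i : ℕ) (h : i + 1 < n),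
      a ⟨i, by omega⟩ < a ⟨i + 1, h⟩ ∧ a ⟨i + 1, h⟩ < b ⟨i, by omega⟩ ∧
      b ⟨i, by omega⟩ < b ⟨i + 1, h⟩) ∧
  (∀ (i : ℕ) (h : i + 2 < n), b ⟨i, by omega⟩ ≤ a ⟨i + 2, h⟩)

/-- `f : Fin n → HomeoR` is a family of generators of an `n`-prechain group. -/
def IsPrechainGens {n : ℕ} (f : Fin n → HomeoR) : Prop :=
  2 ≤ n ∧
  ∃ a b : Fin n → EReal, IsChainOfIntervals a b ∧
    (∀ i, supp (f i) = eIoo (a i) (b i)) ∧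
    (∀ i, ∀ t : ℝ, t ≤ f i t)

open scoped commutatorElement

/-- The relators of Thompson's group `F`: `[b⁻¹a, aba⁻¹]` and `[b⁻¹a, a²ba⁻²]`. -/
def thompsonFRels : Set (FreeGroup (Fin 2)) :=
  letI a : FreeGroup (Fin 2) := FreeGroup.of 0
  letI b : FreeGroup (Fin 2) := FreeGroup.of 1
  {⁅b⁻¹ * a, a * b * a⁻¹⁆, ⁅b⁻¹ * a, a ^ 2 * b * a⁻¹ ^ 2⁆}

/-- Thompson's group `F`. -/
def ThompsonF : Type := PresentedGroup thompsonFRels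

instance : Group ThompsonF := by unfold ThompsonF; infer_instance

/-- The relators of the Higman–Thompson group `Fₙ`:
`gᵢ⁻¹ gⱼ gᵢ g_{j+n-1}⁻¹` for `i < j`. -/
def higmanThompsonRels (n : ℕ) : Set (FreeGroup ℕ) :=
  {r | ∃ i j : ℕ, i < j ∧
      r = (FreeGroup.of i)⁻¹ * FreeGroup.of j * FreeGroup.of i *
        (FreeGroup.of (j + n - 1))⁻¹}

/-- The Higman–Thompson group `Fₙ`. -/
def HigmanThompsonF (n : ℕ) : Type := PresentedGroup (higmanThompsonRels n)

instance (n : ℕ) : Group (HigmanThompsonF n) := by unfold HigmanThompsonF; infer_instance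

/-- `f : Fin n → HomeoR` is a family of generators of an `n`-chain group:
a prechain family such that each pair of consecutive generators generates a copy of
Thompson's group `F`. -/
def IsChainGens {n : ℕ} (f : Fin n → HomeoR) : Prop :=
  IsPrechainGens f ∧
  ∀ (i : ℕ) (h : i + 1 < n),
    Nonempty ((Subgroup.closure {f ⟨i, by omega⟩, f ⟨i + 1, h⟩} : Subgroup HomeoR) ≃* ThompsonF)

/-- A subgroup of `Homeo⁺(ℝ)` is an `n`-chain group if it is generated by an
`n`-family of chain group generators. -/
def IsChainGroup (n : ℕ) (G : Subgroup HomeoR) : Prop :=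
  ∃ f : Fin n → HomeoR, IsChainGens f ∧ G = Subgroup.closure (Set.range f)

/-- The orbit of a point under a subgroup of `Homeo⁺(ℝ)`. -/
def orbitG (G : Subgroup HomeoR) (x : ℝ) : Set ℝ := {y : ℝ | ∃ g ∈ G, g x = y}

/-!
The product of the generators moves every point of the span `J = ⋃ Jᵢ` of the chain to the right,
and every element of `G` agrees near the ends of `J` with powers of the first and the last
generator; hence `G'` consists of elements supported in compact subintervals of `J`. Commutators
with powers of the product localize each element of `G` on a compact subinterval to an element of
`G'`; this makes `G'` perfect and, together with minimality and the contraction of the last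
generator towards the left end of its support, lets `G'` move any compact subinterval into any
open subinterval of `J`.

Higman's argument then applies: if `M` is normalized by `G'` and contains `γ ≠ 1`, choose an
interval `U` with `γ U ∩ U = ∅` and conjugate `u, v ∈ G'` into `U` by some `σ ∈ G'`; then
`⁅⁅u, γ⁆, v⁆ = ⁅u, v⁆` lies in `M`, and perfectness gives `G' ≤ M`.
-/

section Higman

variable {Γ : Type*} [Group Γ]

theorem commutatorElement_commutatorElement_eq_of_commute {u γ v : Γ}
    (h : Commute (γ * u * γ⁻¹) v) : ⁅⁅u, γ⁆, v⁆ = ⁅u, v⁆ := by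
  have h' : Commute (γ * u⁻¹ * γ⁻¹) v := by simpa [mul_assoc] using h.inv_left
  calc ⁅⁅u, γ⁆, v⁆ = u * ((γ * u⁻¹ * γ⁻¹) * v * (γ * u⁻¹ * γ⁻¹)⁻¹) * u⁻¹ * v⁻¹ := by group
    _ = ⁅u, v⁆ := by rw [h'.eq]; group

namespace Subgroup

theorem le_normalizer_commutator {H K₁ K₂ : Subgroup Γ} (h₁ : H ≤ normalizer (K₁ : Set Γ))
    (h₂ : H ≤ normalizer (K₂ : Set Γ)) : H ≤ normalizer (⁅K₁, K₂⁆ : Subgroup Γ) := fun g hg => by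
  rw [mem_normalizer_iff_map_conj_eq, map_commutator, mem_normalizer_iff_map_conj_eq.1 (h₁ hg),
    mem_normalizer_iff_map_conj_eq.1 (h₂ hg)]

theorem commutator_closure_le {s : Set Γ} {N : Subgroup Γ} (hN : closure s ≤ normalizer (N : Set Γ))
    (hs : ∀ x ∈ s, ∀ y ∈ s, ⁅x, y⁆ ∈ N) : ⁅closure s, closure s⁆ ≤ N := by
  have conj_mem {g n : Γ} (hg : g ∈ closure s) (hn : n ∈ N) : g * n * g⁻¹ ∈ N :=
    (mem_normalizer_iff.1 (hN hg) n).1 hn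
  rw [commutator_le]
  intro x hx y hy
  induction hx, hy using closure_induction₂ with
  | mem x y hx hy => exact hs x hx y hy
  | one_left => simp
  | one_right => simp
  | mul_left x y z hx hy _ hxz hyz =>
    rw [show ⁅x * y, z⁆ = (x * ⁅y, z⁆ * x⁻¹) * ⁅x, z⁆ by group]
    exact mul_mem (conj_mem hx hyz) hxz
  | mul_right y z x hy _ _ hxy hxz =>
    rw [show ⁅x, y * z⁆ = ⁅x, y⁆ * (y * ⁅x, z⁆ * y⁻¹) by group]
    exact mul_mem hxy (conj_mem hy hxz)
  | inv_left x y hx _ hxy =>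
    rw [show ⁅x⁻¹, y⁆ = x⁻¹ * ⁅x, y⁆⁻¹ * x⁻¹⁻¹ by group]
    exact conj_mem (inv_mem hx) (inv_mem hxy)
  | inv_right x y _ hy hxy =>
    rw [show ⁅x, y⁻¹⁆ = y⁻¹ * ⁅x, y⁆⁻¹ * y⁻¹⁻¹ by group]
    exact conj_mem (inv_mem hy) (inv_mem hxy)

theorem le_of_le_normalizer_of_commute_conj {D M : Subgroup Γ} (hD : D ≤ ⁅D, D⁆)
    (hM : D ≤ normalizer (M : Set Γ)) {γ : Γ} (hγ : γ ∈ M)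
    (hdisp : ∀ u ∈ D, ∀ v ∈ D, ∃ σ ∈ D, Commute (γ * (σ * u * σ⁻¹) * γ⁻¹) (σ * v * σ⁻¹)) :
    D ≤ M := by
  have conj_mem {g m : Γ} (hg : g ∈ D) (hm : m ∈ M) : g * m * g⁻¹ ∈ M :=
    (mem_normalizer_iff.1 (hM hg) m).1 hm
  refine hD.trans (commutator_le.2 fun u hu v hv => ?_)
  obtain ⟨σ, hσ, hcomm⟩ := hdisp u hu v hv
  have hu' : σ * u * σ⁻¹ ∈ D := mul_mem (mul_mem hσ hu) (inv_mem hσ)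
  have hv' : σ * v * σ⁻¹ ∈ D := mul_mem (mul_mem hσ hv) (inv_mem hσ)
  have hk : ⁅σ * u * σ⁻¹, γ⁆ ∈ M := by
    rw [commutatorElement_def]
    exact mul_mem (conj_mem hu' hγ) (inv_mem hγ)
  have hk' : ⁅⁅σ * u * σ⁻¹, γ⁆, σ * v * σ⁻¹⁆ ∈ M := by
    rw [commutatorElement_def]
    simpa only [mul_assoc] using mul_mem hk (conj_mem hv' (inv_mem hk))
  have huv : σ * ⁅u, v⁆ * σ⁻¹ ∈ M := by
    rwa [commutatorElement_commutatorElement_eq_of_commute hcomm,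
      show ⁅σ * u * σ⁻¹, σ * v * σ⁻¹⁆ = σ * ⁅u, v⁆ * σ⁻¹ by group] at hk'
  exact (mem_normalizer_iff.1 (hM hσ) _).2 huv

end Subgroup

theorem isSimpleGroup_commutator_and_commutator_le_of_displacing
    (hperf : commutator Γ ≤ ⁅commutator Γ, commutator Γ⁆) (hne : commutator Γ ≠ ⊥)
    (hdisp : ∀ γ : Γ, γ ≠ 1 → ∀ u ∈ commutator Γ, ∀ v ∈ commutator Γ, ∃ σ ∈ commutator Γ,
      Commute (γ * (σ * u * σ⁻¹) * γ⁻¹) (σ * v * σ⁻¹)) :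
    IsSimpleGroup (commutator Γ) ∧
      ∀ N : Subgroup Γ, N.Normal → N ≠ ⊥ → commutator Γ ≤ N := by
  have key {M : Subgroup Γ} (hM : commutator Γ ≤ Subgroup.normalizer (M : Set Γ)) (hne : M ≠ ⊥) :
      commutator Γ ≤ M := by
    obtain ⟨⟨γ, hγM⟩, hγ⟩ := Subgroup.ne_bot_iff_exists_ne_one.1 hne
    exact Subgroup.le_of_le_normalizer_of_commute_conj hperf hM hγM
      (hdisp γ (by simpa using hγ))
  refine ⟨@IsSimpleGroup.mk _ _ ((Subgroup.nontrivial_iff_ne_bot _).2 hne) fun M hM => ?_,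
    fun N hN hne => key (by simp [N.normalizer_eq_top]) hne⟩
  refine (eq_or_ne M ⊥).imp_right fun hne => ?_
  have hinj := (commutator Γ).subtype_injective
  have htop : (⊤ : Subgroup (commutator Γ)).map (commutator Γ).subtype = commutator Γ := by
    rw [← MonoidHom.range_eq_map, Subgroup.range_subtype]
  have hnorm := Subgroup.le_normalizer_map (H := M) (commutator Γ).subtype
  rw [M.normalizer_eq_top, htop] at hnorm
  have hle := key hnorm ((Subgroup.map_eq_bot_iff_of_injective M hinj).not.2 hne)
  exact top_le_iff.1 ((Subgroup.map_le_map_iff_of_injective hinj).1 (htop.trans_le hle))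

theorem Subgroup.isSimpleGroup_commutator_and_commutator_le_of_displacing (G : Subgroup Γ)
    (hperf : ⁅G, G⁆ ≤ ⁅⁅G, G⁆, ⁅G, G⁆⁆) (hne : ⁅G, G⁆ ≠ ⊥)
    (hdisp : ∀ γ ∈ G, γ ≠ 1 → ∀ u ∈ ⁅G, G⁆, ∀ v ∈ ⁅G, G⁆, ∃ σ ∈ ⁅G, G⁆,
      Commute (γ * (σ * u * σ⁻¹) * γ⁻¹) (σ * v * σ⁻¹)) :
    IsSimpleGroup (_root_.commutator G) ∧
      ∀ N : Subgroup G, N.Normal → N ≠ ⊥ → _root_.commutator G ≤ N := by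
  have hinj := G.subtype_injective
  have hmap := G.map_subtype_commutator
  refine _root_.isSimpleGroup_commutator_and_commutator_le_of_displacing ?_ ?_ ?_
  · rw [← map_le_map_iff_of_injective hinj, map_commutator, hmap]
    exact hperf
  · rwa [Ne, ← map_eq_bot_iff_of_injective _ hinj, hmap]
  · intro γ hγ u hu v hv
    have hmem {w : G} : w ∈ _root_.commutator G ↔ (w : Γ) ∈ ⁅G, G⁆ := by
      rw [← hmap]
      exact (mem_map_iff_mem hinj).symm
    obtain ⟨σ, hσ, hcomm⟩ := hdisp γ γ.2 (by simpa using hγ) u (hmem.1 hu) v (hmem.1 hv)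
    exact ⟨⟨σ, G.commutator_le_self hσ⟩, hmem.2 hσ, Subtype.ext hcomm⟩

end Higman

open Set Filter Topology

section Support

variable {g h σ τ γ : HomeoR} {x : ℝ}

theorem notMem_supp : x ∉ supp g ↔ g x = x := not_not

theorem apply_mem_supp_iff : g x ∈ supp g ↔ x ∈ supp g := g.injective.ne_iff

theorem inv_apply_eq_self_iff : g⁻¹ x = x ↔ g x = x := by
  rw [← g.injective.eq_iff, RelIso.apply_inv_self, eq_comm]

theorem Commute.apply_mem_supp_iff (hc : Commute g h) : g x ∈ supp h ↔ x ∈ supp h := by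
  have hgh : h (g x) = g (h x) := congrArg (· x) hc.eq.symm
  show h (g x) ≠ g x ↔ h x ≠ x
  rw [hgh, g.injective.ne_iff]

theorem supp_conj (g h : HomeoR) : supp (g * h * g⁻¹) = g '' supp h := by
  ext x
  rw [OrderIso.image_eq_preimage_symm, mem_preimage]
  exact g.injective.ne_iff' (RelIso.apply_inv_self g x)

theorem supp_subset_of_mem_closure {s : Set HomeoR} {U : Set ℝ} (hs : ∀ g ∈ s, supp g ⊆ U)
    (hg : g ∈ Subgroup.closure s) : supp g ⊆ U := by
  have hle : Subgroup.closure s ≤ fixingSubgroup HomeoR Uᶜ :=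
    (Subgroup.closure_le _).2 fun g hg => (mem_fixingSubgroup_iff HomeoR).2 fun x hx =>
      notMem_supp.1 fun hx' => hx (hs g hg hx')
  exact fun x hx => by_contra fun hxU => hx ((mem_fixingSubgroup_iff HomeoR).1 (hle hg) x hxU)

theorem commute_of_disjoint_supp (hgh : Disjoint (supp g) (supp h)) : Commute g h := by
  refine RelIso.ext fun x => ?_
  show g (h x) = h (g x)
  by_cases hg : x ∈ supp g
  · rw [notMem_supp.1 (hgh.notMem_of_mem_left hg),
      notMem_supp.1 (hgh.notMem_of_mem_left (apply_mem_supp_iff.2 hg))]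
  by_cases hh : x ∈ supp h
  · rw [notMem_supp.1 hg, notMem_supp.1 (hgh.notMem_of_mem_right (apply_mem_supp_iff.2 hh))]
  · rw [notMem_supp.1 hg, notMem_supp.1 hh, notMem_supp.1 hg]

theorem conj_eq_conj_of_eqOn (H : EqOn σ g (supp h)) : g * h * g⁻¹ = σ * h * σ⁻¹ := by
  refine RelIso.ext fun y => ?_
  show g (h (g⁻¹ y)) = σ (h (σ⁻¹ y))
  by_cases hy : g⁻¹ y ∈ supp h
  · have hσ : σ⁻¹ y = g⁻¹ y := σ.symm_apply_eq.2 (by rw [H hy, RelIso.apply_inv_self])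
    rw [hσ, H (apply_mem_supp_iff.2 hy)]
  · have hσ : σ⁻¹ y ∉ supp h := fun hσ => hy <| by
      have hgσ : g⁻¹ y = σ⁻¹ y := g.symm_apply_eq.2 (by rw [← H hσ, RelIso.apply_inv_self])
      rwa [hgσ]
    rw [notMem_supp.1 hy, notMem_supp.1 hσ, RelIso.apply_inv_self, RelIso.apply_inv_self]

theorem commutatorElement_eq_of_eqOn_left (H : EqOn σ g (supp h)) : ⁅g, h⁆ = ⁅σ, h⁆ := by
  simp only [commutatorElement_def, conj_eq_conj_of_eqOn H]

theorem commutatorElement_eq_of_eqOn_right (H : EqOn τ h (supp g)) : ⁅g, h⁆ = ⁅g, τ⁆ := by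
  rw [← commutatorElement_inv, commutatorElement_eq_of_eqOn_left H, commutatorElement_inv]

theorem eqOn_commutatorElement {s : Set ℝ} (hs : MapsTo ⇑(h⁻¹) s (supp g)ᶜ) : EqOn ⇑⁅g, h⁆ g s := by
  intro x hx
  show g (h (g⁻¹ (h⁻¹ x))) = g x
  rw [inv_apply_eq_self_iff.2 (notMem_supp.1 (hs hx)), RelIso.apply_inv_self]

theorem supp_commutatorElement_subset : supp ⁅g, h⁆ ⊆ supp g ∪ h '' supp g := by
  intro x hx
  by_contra hx'
  rw [mem_union, not_or, OrderIso.image_eq_preimage_symm] at hx'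
  refine hx ((eqOn_commutatorElement (s := {x}) ?_ rfl).trans (notMem_supp.1 hx'.1))
  exact mapsTo_singleton.2 hx'.2

theorem supp_conj_subset_of_eqOn {s : Set ℝ} (H : EqOn σ g s) (hu : supp h ⊆ s) :
    supp (σ * h * σ⁻¹) ⊆ g '' s := by
  rw [supp_conj, ← H.image_eq]
  exact image_mono hu

theorem commute_conj_of_supp_subset {U : Set ℝ} (hg : supp g ⊆ U) (hh : supp h ⊆ U)
    (hU : Disjoint U (γ '' U)) : Commute (γ * g * γ⁻¹) h := by
  refine commute_of_disjoint_supp ?_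
  rw [supp_conj]
  exact (hU.mono_left hh).symm.mono_left (image_mono hg)

theorem exists_Ioo_disjoint_image {J : Set ℝ} (hx : x ∈ J) (hγx : γ x ∈ J) (hne : γ x ≠ x) :
    ∃ p ∈ J, ∃ r ∈ J, p < r ∧ Disjoint (Ioo p r) (γ '' Ioo p r) := by
  rcases hne.lt_or_gt with hlt | hgt
  · refine ⟨γ x, hγx, x, hx, hlt, ?_⟩
    rw [OrderIso.image_Ioo, Ioo_disjoint_Ioo]
    exact (min_le_right _ _).trans (le_max_left _ _)
  · refine ⟨x, hx, γ x, hγx, hgt, ?_⟩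
    rw [OrderIso.image_Ioo, Ioo_disjoint_Ioo]
    exact (min_le_left _ _).trans (le_max_right _ _)

end Support

section Dynamics

variable {g φ : HomeoR}

theorem lt_apply_of_mem_supp (hg : ∀ t, t ≤ g t) {x : ℝ} (hx : x ∈ supp g) : x < g x :=
  (hg x).lt_of_ne (Ne.symm hx)

theorem le_pow_apply (hg : ∀ t, t ≤ g t) (m : ℕ) (t : ℝ) : t ≤ (g ^ m) t := by
  induction m with
  | zero => rfl
  | succ m ih =>
    rw [pow_succ']
    exact ih.trans (hg _)

theorem pow_inv_apply_le (hg : ∀ t, t ≤ g t) (m : ℕ) (t : ℝ) : (g ^ m)⁻¹ t ≤ t := by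
  simpa using le_pow_apply hg m ((g ^ m)⁻¹ t)

theorem le_list_prod_apply {L : List HomeoR} (hL : ∀ g ∈ L, ∀ t, t ≤ g t) (x : ℝ) :
    x ≤ L.prod x := by
  induction L with
  | nil => rfl
  | cons g L ih =>
    rw [List.prod_cons]
    exact (ih fun g' hg' => hL g' (List.mem_cons_of_mem _ hg')).trans (hL g (by simp) _)

theorem lt_list_prod_apply {L : List HomeoR} (hL : ∀ g ∈ L, ∀ t, t ≤ g t) (hg : g ∈ L) {x : ℝ}
    (hx : x ∈ supp g) : x < L.prod x := by
  induction L with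
  | nil => simp at hg
  | cons g' L ih =>
    have hL' : ∀ g ∈ L, ∀ t, t ≤ g t := fun g'' hg'' => hL g'' (List.mem_cons_of_mem _ hg'')
    rw [List.prod_cons]
    rcases List.mem_cons.1 hg with rfl | hgL
    · exact (lt_apply_of_mem_supp (hL g (by simp)) hx).trans_le
        (g.monotone (le_list_prod_apply hL' x))
    · exact (ih hL' hgL).trans_le (hL g' (by simp) _)

theorem exists_pow_apply_lt {t w : ℝ} (h : ∀ z ∈ Icc t w, φ z < z) :
    ∃ m : ℕ, (φ ^ m) w < t := by
  by_contra! hc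
  set v : ℕ → ℝ := fun m => (φ ^ m) w
  have hv (m : ℕ) : v (m + 1) = φ (v m) := by simp only [v, pow_succ']; rfl
  have hmem (m : ℕ) : v m ∈ Icc t w := by
    induction m with
    | zero => exact ⟨hc 0, le_rfl⟩
    | succ m ih => exact ⟨hc _, (hv m ▸ (h _ ih).le).trans ih.2⟩
  have hanti : Antitone v := antitone_nat_of_succ_le fun m => hv m ▸ (h _ (hmem m)).le
  have hlim := tendsto_atTop_ciInf hanti ⟨t, forall_mem_range.2 fun m => (hmem m).1⟩
  have hL := isClosed_Icc.mem_of_tendsto hlim (Eventually.of_forall hmem)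
  have hfix : φ (⨅ m, v m) = ⨅ m, v m :=
    tendsto_nhds_unique ((φ.continuous.tendsto _).comp hlim)
      (((tendsto_add_atTop_iff_nat 1).2 hlim).congr hv)
  exact (h _ hL).ne hfix

end Dynamics

section Germ

def eventuallyFixing (l : Filter ℝ) : Subgroup HomeoR where
  carrier := {g | ∀ᶠ x in l, g x = x}
  mul_mem' {g h} hg hh := by
    filter_upwards [hg, hh] with x hgx hhx
    rw [RelIso.mul_apply, hhx, hgx]
  one_mem' := Eventually.of_forall fun _ => rfl
  inv_mem' hg := by
    filter_upwards [hg] with x hx using inv_apply_eq_self_iff.2 hx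

variable {l : Filter ℝ} {φ g h : HomeoR} {j k : ℤ}

theorem eventuallyEq_zpow_mul (hφ : ∀ k : ℤ, Tendsto ⇑(φ ^ k) l l)
    (hg : ⇑g =ᶠ[l] ⇑(φ ^ j)) (hh : ⇑h =ᶠ[l] ⇑(φ ^ k)) : ⇑(g * h) =ᶠ[l] ⇑(φ ^ (j + k)) :=
  calc ⇑(g * h) = g ∘ h := rfl
    _ =ᶠ[l] g ∘ ⇑(φ ^ k) := hh.fun_comp g
    _ =ᶠ[l] ⇑(φ ^ j) ∘ ⇑(φ ^ k) := hg.comp_tendsto (hφ k)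
    _ = ⇑(φ ^ (j + k)) := by rw [zpow_add]; rfl

theorem eventuallyEq_zpow_inv (hφ : ∀ k : ℤ, Tendsto ⇑(φ ^ k) l l)
    (hg : ⇑g =ᶠ[l] ⇑(φ ^ k)) : ⇑g⁻¹ =ᶠ[l] ⇑(φ ^ (-k)) := by
  have h := (hg.comp_tendsto (hφ (-k))).fun_comp ⇑g⁻¹
  have hl : ⇑g⁻¹ ∘ (⇑g ∘ ⇑(φ ^ (-k))) = ⇑(φ ^ (-k)) := funext fun x => RelIso.inv_apply_self g _
  have hr : ⇑g⁻¹ ∘ (⇑(φ ^ k) ∘ ⇑(φ ^ (-k))) = ⇑g⁻¹ := funext fun x => by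
    simp [← RelIso.mul_apply]
  rw [hl, hr] at h
  exact h.symm

theorem commutator_le_eventuallyFixing {s : Set HomeoR} (hφ : ∀ k : ℤ, Tendsto ⇑(φ ^ k) l l)
    (hs : ∀ g ∈ s, ∃ k : ℤ, ⇑g =ᶠ[l] ⇑(φ ^ k)) :
    ⁅Subgroup.closure s, Subgroup.closure s⁆ ≤ eventuallyFixing l := by
  have germ (g : HomeoR) (hg : g ∈ Subgroup.closure s) : ∃ k : ℤ, ⇑g =ᶠ[l] ⇑(φ ^ k) := by
    induction hg using Subgroup.closure_induction with
    | mem g hg => exact hs g hg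
    | one => exact ⟨0, by rw [zpow_zero]⟩
    | mul g h _ _ hg hh =>
      obtain ⟨j, hj⟩ := hg
      obtain ⟨k, hk⟩ := hh
      exact ⟨j + k, eventuallyEq_zpow_mul hφ hj hk⟩
    | inv g _ hg =>
      obtain ⟨k, hk⟩ := hg
      exact ⟨-k, eventuallyEq_zpow_inv hφ hk⟩
  refine Subgroup.commutator_le.2 fun g hg h hh => ?_
  obtain ⟨j, hj⟩ := germ g hg
  obtain ⟨k, hk⟩ := germ h hh
  have hc := eventuallyEq_zpow_mul hφ (eventuallyEq_zpow_mul hφ (eventuallyEq_zpow_mul hφ hj hk)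
    (eventuallyEq_zpow_inv hφ hj)) (eventuallyEq_zpow_inv hφ hk)
  rw [show j + k + -j + -k = 0 by ring, zpow_zero, ← commutatorElement_def] at hc
  exact hc

end Germ

section Ends

variable {J s : Set ℝ} {c : ℝ} {g : HomeoR}

def lowerEnd (J : Set ℝ) : Filter ℝ := ⨅ c ∈ J, 𝓟 (Iic c)

def upperEnd (J : Set ℝ) : Filter ℝ := ⨅ c ∈ J, 𝓟 (Ici c)

theorem Iic_mem_lowerEnd (hc : c ∈ J) : Iic c ∈ lowerEnd J :=
  mem_iInf_of_mem c (mem_iInf_of_mem hc (mem_principal_self _))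

theorem Ici_mem_upperEnd (hc : c ∈ J) : Ici c ∈ upperEnd J :=
  mem_iInf_of_mem c (mem_iInf_of_mem hc (mem_principal_self _))

theorem mem_lowerEnd (hJ : J.Nonempty) : s ∈ lowerEnd J ↔ ∃ c ∈ J, Iic c ⊆ s := by
  refine (mem_biInf_of_directed (fun c hc c' hc' => ?_) hJ).trans (by simp only [mem_principal])
  exact ⟨min c c', by rcases min_choice c c' with h | h <;> rwa [h],
    principal_mono.2 (Iic_subset_Iic.2 (min_le_left _ _)),
    principal_mono.2 (Iic_subset_Iic.2 (min_le_right _ _))⟩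

theorem mem_upperEnd (hJ : J.Nonempty) : s ∈ upperEnd J ↔ ∃ c ∈ J, Ici c ⊆ s := by
  refine (mem_biInf_of_directed (fun c hc c' hc' => ?_) hJ).trans (by simp only [mem_principal])
  exact ⟨max c c', by rcases max_choice c c' with h | h <;> rwa [h],
    principal_mono.2 (Ici_subset_Ici.2 (le_max_left _ _)),
    principal_mono.2 (Ici_subset_Ici.2 (le_max_right _ _))⟩

theorem tendsto_lowerEnd (hg : MapsTo ⇑(g⁻¹) J J) : Tendsto g (lowerEnd J) (lowerEnd J) := by
  simp only [lowerEnd, tendsto_iInf, tendsto_principal]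
  intro c hc
  filter_upwards [Iic_mem_lowerEnd (hg hc)] with x hx
  simpa using g.monotone hx

theorem tendsto_upperEnd (hg : MapsTo ⇑(g⁻¹) J J) : Tendsto g (upperEnd J) (upperEnd J) := by
  simp only [upperEnd, tendsto_iInf, tendsto_principal]
  intro c hc
  filter_upwards [Ici_mem_upperEnd (hg hc)] with x hx
  simpa using g.monotone hx

end Ends

theorem exists_eqOn_Icc_of_mem_closure {s : Set HomeoR} {D : Subgroup HomeoR} {J : Set ℝ}
    (hJ : ∀ g ∈ Subgroup.closure s, MapsTo g J J)
    (hs : ∀ g ∈ s, ∀ c ∈ J, ∀ d ∈ J, ∃ σ ∈ D, EqOn σ g (Icc c d)) {g : HomeoR}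
    (hg : g ∈ Subgroup.closure s) : ∀ c ∈ J, ∀ d ∈ J, ∃ σ ∈ D, EqOn σ g (Icc c d) := by
  induction hg using Subgroup.closure_induction with
  | mem g hg => exact hs g hg
  | one => exact fun _ _ _ _ => ⟨1, D.one_mem, eqOn_refl _ _⟩
  | mul g h _ hh ihg ihh =>
    intro c hc d hd
    obtain ⟨σ₂, hσ₂, H₂⟩ := ihh c hc d hd
    obtain ⟨σ₁, hσ₁, H₁⟩ := ihg (h c) (hJ h hh hc) (h d) (hJ h hh hd)
    refine ⟨σ₁ * σ₂, D.mul_mem hσ₁ hσ₂, fun z hz => ?_⟩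
    rw [RelIso.mul_apply, RelIso.mul_apply, H₂ hz, H₁ ⟨h.monotone hz.1, h.monotone hz.2⟩]
  | inv g hg ih =>
    intro c hc d hd
    have hg' := hJ _ (inv_mem hg)
    obtain ⟨σ, hσ, H⟩ := ih (g⁻¹ c) (hg' hc) (g⁻¹ d) (hg' hd)
    refine ⟨σ⁻¹, D.inv_mem hσ, fun z hz => σ.symm_apply_eq.2 ?_⟩
    rw [H ⟨g⁻¹.monotone hz.1, g⁻¹.monotone hz.2⟩, RelIso.apply_inv_self]

theorem eIoo_ordConnected (a b : EReal) : (eIoo a b).OrdConnected :=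
  ⟨fun _ hx _ hy _ hz =>
    ⟨hx.1.trans_le (EReal.coe_le_coe_iff.2 hz.1), (EReal.coe_le_coe_iff.2 hz.2).trans_lt hy.2⟩⟩

theorem exists_mem_eIoo_coe_eq {x y z : EReal} (hxy : x < y) (hyz : y < z) :
    ∃ r ∈ eIoo x z, (r : EReal) = y := by
  have hy := EReal.coe_toReal hyz.ne_top hxy.ne_bot
  exact ⟨y.toReal, ⟨hy ▸ hxy, hy ▸ hyz⟩, hy⟩

-- Indexing by `Fin (m + 2)` encodes `n ≥ 2`.
structure IsPrechain {m : ℕ} (f : Fin (m + 2) → HomeoR) (a b : Fin (m + 2) → EReal) : Prop where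
  isChain : IsChainOfIntervals a b
  supp_eq : ∀ i, supp (f i) = eIoo (a i) (b i)
  le_apply : ∀ i t, t ≤ f i t

def chainSpan {m : ℕ} (a b : Fin (m + 2) → EReal) : Set ℝ := eIoo (a 0) (b (Fin.last (m + 1)))

def pushMap {n : ℕ} (f : Fin n → HomeoR) : HomeoR := (List.ofFn f).prod

theorem pushMap_mem_closure {n : ℕ} (f : Fin n → HomeoR) :
    pushMap f ∈ Subgroup.closure (range f) :=
  Subgroup.list_prod_mem _ fun g hg => by
    obtain ⟨i, rfl⟩ := List.mem_ofFn.1 hg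
    exact Subgroup.subset_closure (mem_range_self i)

namespace IsPrechain

variable {m : ℕ} {f : Fin (m + 2) → HomeoR} {a b : Fin (m + 2) → EReal} (hf : IsPrechain f a b)
include hf

local notation "𝔾" => Subgroup.closure (range f)

section Intervals

theorem lt_of_val_eq_succ {i j : Fin (m + 2)} (hij : (j : ℕ) = i + 1) :
    a i < a j ∧ a j < b i ∧ b i < b j := by
  obtain ⟨i, hi⟩ := i
  obtain ⟨j, hj⟩ := j
  simp only at hij
  subst hij
  exact hf.isChain.2.1 i hj

theorem a_strictMono : StrictMono a :=
  Fin.strictMono_iff_lt_succ.2 fun _ => (hf.lt_of_val_eq_succ (by simp)).1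

theorem b_strictMono : StrictMono b :=
  Fin.strictMono_iff_lt_succ.2 fun _ => (hf.lt_of_val_eq_succ (by simp)).2.2

theorem b_le_a {i j : Fin (m + 2)} (hij : (i : ℕ) + 2 ≤ j) : b i ≤ a j := by
  obtain ⟨i, hi⟩ := i
  have hj := j.isLt
  simp only at hij
  exact (hf.isChain.2.2 i (by omega)).trans (hf.a_strictMono.monotone (Fin.mk_le_of_le_val hij))

theorem eIoo_subset_chainSpan (i : Fin (m + 2)) : eIoo (a i) (b i) ⊆ chainSpan a b :=
  fun _ hx => ⟨(hf.a_strictMono.monotone (Fin.zero_le i)).trans_lt hx.1,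
    hx.2.trans_le (hf.b_strictMono.monotone (Fin.le_last i))⟩

theorem exists_coe_eq_a {i : Fin (m + 2)} (hi : i ≠ 0) : ∃ r ∈ chainSpan a b, (r : EReal) = a i :=
  exists_mem_eIoo_coe_eq (hf.a_strictMono (Fin.pos_iff_ne_zero.2 hi))
    ((hf.isChain.1 i).trans_le (hf.b_strictMono.monotone (Fin.le_last i)))

theorem exists_coe_eq_b {i : Fin (m + 2)} (hi : i ≠ Fin.last (m + 1)) :
    ∃ r ∈ chainSpan a b, (r : EReal) = b i :=
  exists_mem_eIoo_coe_eq ((hf.a_strictMono.monotone (Fin.zero_le i)).trans_lt (hf.isChain.1 i))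
    (hf.b_strictMono (Fin.lt_last_iff_ne_last.2 hi))

theorem exists_mem_supp {x : ℝ} (hx : x ∈ chainSpan a b) : ∃ i, x ∈ supp (f i) := by
  suffices ∀ k : Fin (m + 2), (x : EReal) < b k → ∃ i, x ∈ supp (f i) from this _ hx.2
  intro k
  induction k using Fin.induction with
  | zero => exact fun hxb => ⟨0, hf.supp_eq 0 ▸ ⟨hx.1, hxb⟩⟩
  | succ k ih =>
    intro hxb
    by_cases hxk : (x : EReal) < b k.castSucc
    · exact ih hxk
    · have hak := (hf.lt_of_val_eq_succ (i := k.castSucc) (j := k.succ) (by simp)).2.1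
      exact ⟨k.succ, hf.supp_eq _ ▸ ⟨hak.trans_le (not_lt.1 hxk), hxb⟩⟩

end Intervals

section Dynamics

variable {g : HomeoR} {x y : ℝ}

theorem supp_subset_chainSpan (hg : g ∈ 𝔾) : supp g ⊆ chainSpan a b :=
  supp_subset_of_mem_closure
    (forall_mem_range.2 fun i => hf.supp_eq i ▸ hf.eIoo_subset_chainSpan i) hg

theorem mapsTo_chainSpan (hg : g ∈ 𝔾) :
    MapsTo g (chainSpan a b) (chainSpan a b) := by
  intro x hx
  by_cases hgx : g x = x
  · rwa [hgx]
  · exact hf.supp_subset_chainSpan hg (apply_mem_supp_iff.2 hgx)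

theorem chainSpan_subset_suppG : chainSpan a b ⊆ suppG (𝔾) := by
  intro x hx
  obtain ⟨i, hi⟩ := hf.exists_mem_supp hx
  exact mem_iUnion₂.2 ⟨f i, Subgroup.subset_closure (mem_range_self i), hi⟩

theorem le_apply_of_mem_ofFn (hg : g ∈ List.ofFn f) (t : ℝ) : t ≤ g t := by
  obtain ⟨i, rfl⟩ := List.mem_ofFn.1 hg
  exact hf.le_apply i t

theorem le_pushMap_apply (t : ℝ) : t ≤ pushMap f t :=
  le_list_prod_apply (fun _ => hf.le_apply_of_mem_ofFn) t

theorem lt_pushMap_apply (hx : x ∈ chainSpan a b) : x < pushMap f x := by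
  obtain ⟨i, hi⟩ := hf.exists_mem_supp hx
  exact lt_list_prod_apply (fun _ => hf.le_apply_of_mem_ofFn) (List.mem_ofFn.2 ⟨i, rfl⟩) hi

theorem exists_pushMap_pow_inv_apply_lt (hx : x ∈ chainSpan a b) (hy : y ∈ chainSpan a b) :
    ∃ k : ℕ, (pushMap f ^ k)⁻¹ x < y := by
  simp only [← inv_pow]
  refine exists_pow_apply_lt fun z hz => ?_
  have hz' := hf.lt_pushMap_apply ((eIoo_ordConnected _ _).out hy hx hz)
  simpa using (pushMap f)⁻¹.strictMono hz'

theorem exists_lt_pushMap_pow_apply (hx : x ∈ chainSpan a b) (hy : y ∈ chainSpan a b) :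
    ∃ k : ℕ, y < (pushMap f ^ k) x := by
  obtain ⟨k, hk⟩ := hf.exists_pushMap_pow_inv_apply_lt hy hx
  exact ⟨k, by simpa using (pushMap f ^ k).strictMono hk⟩

end Dynamics

section Germs

theorem chainSpan_nonempty : (chainSpan a b).Nonempty :=
  let ⟨r, hr, _⟩ := hf.exists_coe_eq_b (i := 0) (Fin.last_pos.ne)
  ⟨r, hr⟩

theorem eventuallyEq_lowerEnd (i : Fin (m + 2)) :
    ∃ k : ℤ, ⇑(f i) =ᶠ[lowerEnd (chainSpan a b)] ⇑(f 0 ^ k) := by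
  by_cases hi : i = 0
  · exact ⟨1, by rw [hi, zpow_one]⟩
  obtain ⟨r, hr, hra⟩ := hf.exists_coe_eq_a hi
  refine ⟨0, ?_⟩
  filter_upwards [Iic_mem_lowerEnd hr] with x hx
  refine notMem_supp.1 fun hx' => ?_
  rw [hf.supp_eq, ← hra] at hx'
  exact hx.not_gt (EReal.coe_lt_coe_iff.1 hx'.1)

theorem eventuallyEq_upperEnd (i : Fin (m + 2)) :
    ∃ k : ℤ, ⇑(f i) =ᶠ[upperEnd (chainSpan a b)] ⇑(f (Fin.last (m + 1)) ^ k) := by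
  by_cases hi : i = Fin.last (m + 1)
  · exact ⟨1, by rw [hi, zpow_one]⟩
  obtain ⟨r, hr, hrb⟩ := hf.exists_coe_eq_b hi
  refine ⟨0, ?_⟩
  filter_upwards [Ici_mem_upperEnd hr] with x hx
  refine notMem_supp.1 fun hx' => ?_
  rw [hf.supp_eq, ← hrb] at hx'
  exact hx.not_gt (EReal.coe_lt_coe_iff.1 hx'.2)

theorem exists_supp_subset_Icc {u : HomeoR} (hu : u ∈ ⁅𝔾, 𝔾⁆) :
    ∃ c ∈ chainSpan a b, ∃ d ∈ chainSpan a b, supp u ⊆ Icc c d := by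
  have hmaps (i : Fin (m + 2)) (k : ℤ) : MapsTo ⇑((f i ^ k)⁻¹) (chainSpan a b) (chainSpan a b) :=
    hf.mapsTo_chainSpan (inv_mem (zpow_mem (Subgroup.subset_closure (mem_range_self i)) k))
  have hlow := commutator_le_eventuallyFixing (fun k => tendsto_lowerEnd (hmaps 0 k))
    (forall_mem_range.2 hf.eventuallyEq_lowerEnd) hu
  have hup := commutator_le_eventuallyFixing (fun k => tendsto_upperEnd (hmaps _ k))
    (forall_mem_range.2 hf.eventuallyEq_upperEnd) hu
  obtain ⟨c, hc, hcu⟩ := (mem_lowerEnd hf.chainSpan_nonempty).1 hlow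
  obtain ⟨d, hd, hdu⟩ := (mem_upperEnd hf.chainSpan_nonempty).1 hup
  exact ⟨c, hc, d, hd, fun x hx =>
    ⟨le_of_not_ge fun hxc => hx (hcu hxc), le_of_not_ge fun hxd => hx (hdu hxd)⟩⟩

end Germs

section Localization

variable {c d : ℝ}

-- `pushMap f ^ k` carries `Ici c` beyond `supp (f i)`, so the commutator agrees with `f i` there.
theorem exists_commutator_eqOn_Ici {i : Fin (m + 2)} (hi : i ≠ Fin.last (m + 1))
    (hc : c ∈ chainSpan a b) :
    ∃ σ ∈ ⁅𝔾, 𝔾⁆, EqOn σ (f i) (Ici c) ∧ ∀ x ∈ supp σ, (x : EReal) < b i := by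
  obtain ⟨r, hr, hrb⟩ := hf.exists_coe_eq_b hi
  obtain ⟨k, hk⟩ := hf.exists_lt_pushMap_pow_apply hc hr
  have hfi : ∀ x ∈ supp (f i), (x : EReal) < b i := fun x hx => (hf.supp_eq i ▸ hx).2
  refine ⟨⁅f i, (pushMap f ^ k)⁻¹⁆, Subgroup.commutator_mem_commutator
    (Subgroup.subset_closure (mem_range_self i)) (inv_mem (pow_mem (pushMap_mem_closure f) k)),
    eqOn_commutatorElement fun x hx hx' => ?_, fun x hx => ?_⟩
  · rw [inv_inv] at hx'
    have := hfi _ hx'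
    rw [← hrb, EReal.coe_lt_coe_iff] at this
    exact (hk.trans_le ((pushMap f ^ k).monotone hx)).not_gt this
  · rcases supp_commutatorElement_subset hx with hx | ⟨y, hy, rfl⟩
    · exact hfi x hx
    · exact (EReal.coe_le_coe_iff.2 (pow_inv_apply_le hf.le_pushMap_apply k y)).trans_lt (hfi y hy)

theorem exists_commutator_eqOn_Iic {i : Fin (m + 2)} (hi : i ≠ 0) (hd : d ∈ chainSpan a b) :
    ∃ σ ∈ ⁅𝔾, 𝔾⁆, EqOn σ (f i) (Iic d) := by
  obtain ⟨r, hr, hra⟩ := hf.exists_coe_eq_a hi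
  obtain ⟨k, hk⟩ := hf.exists_pushMap_pow_inv_apply_lt hd hr
  refine ⟨⁅f i, pushMap f ^ k⁆, Subgroup.commutator_mem_commutator
    (Subgroup.subset_closure (mem_range_self i)) (pow_mem (pushMap_mem_closure f) k),
    eqOn_commutatorElement fun x hx hx' => ?_⟩
  have := (hf.supp_eq i ▸ hx').1
  rw [← hra, EReal.coe_lt_coe_iff] at this
  exact (((pushMap f ^ k)⁻¹.monotone hx).trans_lt hk).not_gt this

theorem exists_commutator_eqOn_Icc {g : HomeoR} (hg : g ∈ 𝔾) (hc : c ∈ chainSpan a b)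
    (hd : d ∈ chainSpan a b) :
    ∃ σ ∈ ⁅𝔾, 𝔾⁆, EqOn σ g (Icc c d) := by
  refine exists_eqOn_Icc_of_mem_closure (fun g hg => hf.mapsTo_chainSpan hg)
    (forall_mem_range.2 fun i c hc d hd => ?_) hg c hc d hd
  by_cases hi : i = Fin.last (m + 1)
  · obtain ⟨σ, hσ, H⟩ := hf.exists_commutator_eqOn_Iic (hi ▸ Fin.last_pos.ne') hd
    exact ⟨σ, hσ, H.mono Icc_subset_Iic_self⟩
  · obtain ⟨σ, hσ, H, -⟩ := hf.exists_commutator_eqOn_Ici hi hc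
    exact ⟨σ, hσ, H.mono Icc_subset_Ici_self⟩

end Localization

section Perfect

-- Replace `f i` by `σ ∈ G'` agreeing with it on `supp (f j)`, then `f j` by `τ ∈ G'` agreeing
-- with it on `supp σ`.
theorem commutatorElement_mem_of_val_eq_succ {i j : Fin (m + 2)} (hij : (j : ℕ) = i + 1) :
    ⁅f i, f j⁆ ∈ ⁅⁅𝔾, 𝔾⁆, ⁅𝔾, 𝔾⁆⁆ := by
  have hi : i ≠ Fin.last (m + 1) := fun h => by have := j.isLt; simp [h] at hij; omega
  have hj : j ≠ 0 := fun h => by simp [h] at hij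
  obtain ⟨r₁, hr₁, hra⟩ := hf.exists_coe_eq_a hj
  obtain ⟨r₂, hr₂, hrb⟩ := hf.exists_coe_eq_b hi
  obtain ⟨σ, hσ, Hσ, hσb⟩ := hf.exists_commutator_eqOn_Ici hi hr₁
  obtain ⟨τ, hτ, Hτ⟩ := hf.exists_commutator_eqOn_Iic hj hr₂
  have hsuppj : supp (f j) ⊆ Ici r₁ := fun x hx => by
    have := (hf.supp_eq j ▸ hx).1
    rw [← hra, EReal.coe_lt_coe_iff] at this
    exact this.le
  have hsuppσ : supp σ ⊆ Iic r₂ := fun x hx => by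
    have := hσb x hx
    rw [← hrb, EReal.coe_lt_coe_iff] at this
    exact this.le
  rw [commutatorElement_eq_of_eqOn_left (Hσ.mono hsuppj),
    commutatorElement_eq_of_eqOn_right (Hτ.mono hsuppσ)]
  exact Subgroup.commutator_mem_commutator hσ hτ

theorem commute_of_val_add_two_le {i j : Fin (m + 2)} (hij : (i : ℕ) + 2 ≤ j) :
    Commute (f i) (f j) := by
  refine commute_of_disjoint_supp (Set.disjoint_left.2 fun x hi hj => ?_)
  rw [hf.supp_eq] at hi hj
  exact (hi.2.trans ((hf.b_le_a hij).trans_lt hj.1)).false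

theorem commutatorElement_mem_of_lt {i j : Fin (m + 2)} (hij : i < j) :
    ⁅f i, f j⁆ ∈ ⁅⁅𝔾, 𝔾⁆, ⁅𝔾, 𝔾⁆⁆ := by
  rcases eq_or_ne (j : ℕ) (i + 1) with h | h
  · exact hf.commutatorElement_mem_of_val_eq_succ h
  · rw [commutatorElement_eq_one_iff_commute.2 (hf.commute_of_val_add_two_le (by omega))]
    exact one_mem _

theorem commutator_le_commutator_commutator : ⁅𝔾, 𝔾⁆ ≤ ⁅⁅𝔾, 𝔾⁆, ⁅𝔾, 𝔾⁆⁆ := by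
  have hnorm := Subgroup.normalizer_commutator_ge_left 𝔾 𝔾
  refine Subgroup.commutator_closure_le (Subgroup.le_normalizer_commutator hnorm hnorm)
    (forall_mem_range.2 fun i => forall_mem_range.2 fun j => ?_)
  rcases lt_trichotomy i j with h | rfl | h
  · exact hf.commutatorElement_mem_of_lt h
  · rw [commutatorElement_self]
    exact one_mem _
  · rw [← commutatorElement_inv]
    exact inv_mem (hf.commutatorElement_mem_of_lt h)

end Perfect

section Compression

variable {c d p q r t : ℝ}

-- Move `[c, d]` to the right of `q` by a power of `pushMap f`, then contract it towards `q`,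
-- a fixed point of the last generator, by a power of its inverse.
theorem exists_mapsTo_Icc_Ioo_of_coe_eq_a_last (hq : q ∈ chainSpan a b)
    (hqa : (q : EReal) = a (Fin.last (m + 1))) (hqt : q < t) (hc : c ∈ chainSpan a b)
    (hd : d ∈ chainSpan a b) :
    ∃ ρ ∈ 𝔾, MapsTo ρ (Icc c d) (Ioo q t) := by
  set fN := f (Fin.last (m + 1))
  have hfN : fN ∈ 𝔾 := Subgroup.subset_closure (mem_range_self _)
  obtain ⟨k, hk⟩ := hf.exists_lt_pushMap_pow_apply hc hq
  have hw := hf.mapsTo_chainSpan (pow_mem (pushMap_mem_closure f) k) hd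
  obtain ⟨j, hj⟩ := exists_pow_apply_lt (φ := fN⁻¹) (t := t) (w := (pushMap f ^ k) d)
    fun z hz => by
      have hzN : z ∈ supp fN := hf.supp_eq _ ▸ ⟨hqa ▸ EReal.coe_lt_coe_iff.2 (hqt.trans_le hz.1),
        (EReal.coe_le_coe_iff.2 hz.2).trans_lt hw.2⟩
      have hz' := fN⁻¹.strictMono (lt_apply_of_mem_supp (hf.le_apply _) hzN)
      rwa [RelIso.inv_apply_self] at hz'
  have hqN : fN⁻¹ q = q := inv_apply_eq_self_iff.2 <| notMem_supp.1 fun hq' =>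
    (hf.supp_eq _ ▸ hq').1.ne' hqa
  have hqNj : (fN⁻¹ ^ j) • q = q := MulAction.mem_stabilizer_iff.1
    (pow_mem (MulAction.mem_stabilizer_iff.2 hqN : fN⁻¹ ∈ MulAction.stabilizer HomeoR q) j)
  refine ⟨fN⁻¹ ^ j * pushMap f ^ k,
    mul_mem (pow_mem (inv_mem hfN) j) (pow_mem (pushMap_mem_closure f) k), fun z hz => ⟨?_, ?_⟩⟩
  · exact hqNj ▸ (fN⁻¹ ^ j).strictMono (hk.trans_le ((pushMap f ^ k).monotone hz.1))
  · exact ((fN⁻¹ ^ j).monotone ((pushMap f ^ k).monotone hz.2)).trans_lt hj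

theorem exists_mapsTo_Icc_Ioo
    (hmin : ∀ p ∈ chainSpan a b, chainSpan a b ⊆ closure (orbitG 𝔾 p))
    (hc : c ∈ chainSpan a b) (hd : d ∈ chainSpan a b) (hp : p ∈ chainSpan a b)
    (hr : r ∈ chainSpan a b) (hpr : p < r) :
    ∃ ρ ∈ 𝔾, MapsTo ρ (Icc c d) (Ioo p r) := by
  obtain ⟨q, hq, hqa⟩ := hf.exists_coe_eq_a (Fin.last_pos.ne')
  obtain ⟨w, hpw, hwr⟩ := exists_between hpr
  have hw : w ∈ chainSpan a b := (eIoo_ordConnected _ _).out hp hr ⟨hpw.le, hwr.le⟩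
  obtain ⟨_, ⟨hpg, hgr⟩, g, hg, rfl⟩ :=
    mem_closure_iff.1 (hmin q hq hw) (Ioo p r) isOpen_Ioo ⟨hpw, hwr⟩
  obtain ⟨ρ, hρ, hρmaps⟩ := hf.exists_mapsTo_Icc_Ioo_of_coe_eq_a_last hq hqa
    (by simpa using g⁻¹.strictMono hgr) hc hd
  refine ⟨g * ρ, mul_mem hg hρ, fun z hz => ?_⟩
  have hρz := hρmaps hz
  exact ⟨hpg.trans (g.strictMono hρz.1), by simpa using g.strictMono hρz.2⟩

end Compression

theorem exists_conj_commute
    (hmin : ∀ p ∈ chainSpan a b, chainSpan a b ⊆ closure (orbitG 𝔾 p))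
    {γ u v : HomeoR} (hγ : γ ∈ 𝔾) (hγ1 : γ ≠ 1) (hu : u ∈ ⁅𝔾, 𝔾⁆) (hv : v ∈ ⁅𝔾, 𝔾⁆) :
    ∃ σ ∈ ⁅𝔾, 𝔾⁆, Commute (γ * (σ * u * σ⁻¹) * γ⁻¹) (σ * v * σ⁻¹) := by
  obtain ⟨x, hx⟩ : ∃ x, γ x ≠ x := by
    by_contra! h
    exact hγ1 (RelIso.ext h)
  have hxJ := hf.supp_subset_chainSpan hγ hx
  obtain ⟨p, hp, r, hr, hpr, hdisj⟩ :=
    exists_Ioo_disjoint_image hxJ (hf.mapsTo_chainSpan hγ hxJ) hx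
  obtain ⟨c₁, hc₁, d₁, hd₁, hu'⟩ := hf.exists_supp_subset_Icc hu
  obtain ⟨c₂, hc₂, d₂, hd₂, hv'⟩ := hf.exists_supp_subset_Icc hv
  have hc : min c₁ c₂ ∈ chainSpan a b := by rcases min_choice c₁ c₂ with h | h <;> rwa [h]
  have hd : max d₁ d₂ ∈ chainSpan a b := by rcases max_choice d₁ d₂ with h | h <;> rwa [h]
  obtain ⟨ρ, hρ, hρmaps⟩ := hf.exists_mapsTo_Icc_Ioo hmin hc hd hp hr hpr
  obtain ⟨σ, hσ, H⟩ := hf.exists_commutator_eqOn_Icc hρ hc hd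
  refine ⟨σ, hσ, commute_conj_of_supp_subset ?_ ?_ hdisj⟩
  · exact (supp_conj_subset_of_eqOn H (hu'.trans (Icc_subset_Icc (min_le_left _ _)
      (le_max_left _ _)))).trans hρmaps.image_subset
  · exact (supp_conj_subset_of_eqOn H (hv'.trans (Icc_subset_Icc (min_le_right _ _)
      (le_max_right _ _)))).trans hρmaps.image_subset

-- A homeomorphism commuting with `f 0` preserves `supp (f 0)`, whereas `f 1` moves points just
-- below `b 0` above it.
theorem commutatorElement_ne_one : ⁅f 0, f 1⁆ ≠ 1 := by
  intro h
  obtain ⟨ha, hab, hb⟩ := hf.lt_of_val_eq_succ (i := 0) (j := 1) (by simp)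
  obtain ⟨r, -, hr⟩ := hf.exists_coe_eq_b (i := 0) Fin.last_pos.ne
  have hr1 : r ∈ supp (f 1) := hf.supp_eq 1 ▸ ⟨hr ▸ hab, hr ▸ hb⟩
  obtain ⟨z, hrz, hz⟩ := exists_between (lt_apply_of_mem_supp (hf.le_apply 1) hr1)
  have hx0 : (f 1)⁻¹ z ∈ supp (f 0) := by
    have h1 : (f 1)⁻¹ r ∈ supp (f 1) := apply_mem_supp_iff.1 (by simpa using hr1)
    refine hf.supp_eq 0 ▸ ⟨ha.trans ((hf.supp_eq 1 ▸ h1).1.trans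
      (EReal.coe_lt_coe_iff.2 ((f 1)⁻¹.strictMono hrz))), hr ▸ EReal.coe_lt_coe_iff.2 ?_⟩
    simpa using (f 1)⁻¹.strictMono hz
  have hz0 := (commutatorElement_eq_one_iff_commute.1 h).symm.apply_mem_supp_iff.2 hx0
  rw [RelIso.apply_inv_self, hf.supp_eq, ← hr] at hz0
  exact hrz.not_gt (EReal.coe_lt_coe_iff.1 hz0.2)

theorem commutator_ne_bot : ⁅𝔾, 𝔾⁆ ≠ ⊥ := fun h =>
  hf.commutatorElement_ne_one <| (Subgroup.eq_bot_iff_forall _).1 h _ <|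
    Subgroup.commutator_mem_commutator (Subgroup.subset_closure (mem_range_self 0))
      (Subgroup.subset_closure (mem_range_self 1))

end IsPrechain

/-- If an `n`-chain group `G` acts minimally on its support, then the
commutator subgroup `G'` is simple and every nontrivial normal subgroup of `G`
contains `G'`. -/
theorem stmt4 {n : ℕ} (f : Fin n → HomeoR) (hf : IsChainGens f)
    (G : Subgroup HomeoR) (hG : G = Subgroup.closure (Set.range f))
    (hmin : ∀ p ∈ suppG G, suppG G ⊆ closure (orbitG G p)) :
    IsSimpleGroup ↥(commutator ↥G) ∧
      ∀ N : Subgroup ↥G, N.Normal → N ≠ ⊥ → commutator ↥G ≤ N := by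
  obtain ⟨hn, a, b, hab, hsupp, hle⟩ := hf.1
  obtain ⟨m, rfl⟩ : ∃ m, n = m + 2 := ⟨n - 2, by omega⟩
  have hc : IsPrechain f a b := ⟨hab, hsupp, hle⟩
  subst hG
  have hmin' : ∀ p ∈ chainSpan a b, chainSpan a b ⊆ closure (orbitG _ p) := fun p hp =>
    hc.chainSpan_subset_suppG.trans (hmin p (hc.chainSpan_subset_suppG hp))
  exact Subgroup.isSimpleGroup_commutator_and_commutator_le_of_displacing _
    hc.commutator_le_commutator_commutator hc.commutator_ne_bot
    fun γ hγ hγ1 u hu v hv => hc.exists_conj_commute hmin' hγ hγ1 hu hv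
end

section
/- Let a ∈ Homeo⁺(ℝ) be the translation a(x) = x + 1, let n ≥ 1, and let G = ⟨g₁,…,gₙ⟩ ≤ Homeo⁺(ℝ) be a subgroup with supp G ⊆ (0, 1) such that the abelianization G/G′ is isomorphic to ℤⁿ. Then G is isomorphic to a subgroup of the commutator subgroup of the group ⟨G ∪ {a}⟩ ≤ Homeo⁺(ℝ). -/
open scoped commutatorElement

theorem exists_monoidHom_ofAdd_single {M ι : Type*} [Group M] [Fintype ι] [DecidableEq ι]
    (h : ι → M) (hcomm : Pairwise fun i j => Commute (h i) (h j)) :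
    ∃ Ψ : Multiplicative (ι → ℤ) →* M, ∀ i, Ψ (Multiplicative.ofAdd (Pi.single i 1)) = h i := by
  have hcomm' : Pairwise fun i j => ∀ x y : Multiplicative ℤ,
      Commute (zpowersHom M (h i) x) (zpowersHom M (h j) y) :=
    fun _ _ hij _ _ => (hcomm hij).zpow_zpow _ _
  refine ⟨(MonoidHom.noncommPiCoprod (fun i => zpowersHom M (h i)) hcomm').comp
      (MulEquiv.piMultiplicative fun _ => ℤ).toMonoidHom, fun i => ?_⟩
  have hsingle : MulEquiv.piMultiplicative (fun _ => ℤ) (Multiplicative.ofAdd (Pi.single i 1)) =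
      Pi.mulSingle i (Multiplicative.ofAdd 1) := by
    ext j
    by_cases hj : j = i
    · subst hj; simp
    · simp [hj]
  rw [MonoidHom.comp_apply, MulEquiv.coe_toMonoidHom, hsingle,
    MonoidHom.noncommPiCoprod_mulSingle, zpowersHom_apply, toAdd_ofAdd, zpow_one]

/-- `n` elements generating `ℤⁿ` form a basis, since a surjective endomorphism of a
noetherian module is injective. -/
theorem exists_monoidHom_apply_eq_ofAdd_single {G ι : Type*} [Group G] [Fintype ι]
    [DecidableEq ι] (g : ι → G) (hg : Subgroup.closure (Set.range g) = ⊤)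
    (e : Abelianization G ≃* Multiplicative (ι → ℤ)) :
    ∃ κ : G →* Multiplicative (ι → ℤ), ∀ i, κ (g i) = Multiplicative.ofAdd (Pi.single i 1) := by
  let ρ : G →* Multiplicative (ι → ℤ) := e.toMonoidHom.comp Abelianization.of
  let v : ι → ι → ℤ := fun i => (ρ (g i)).toAdd
  have hspan : Submodule.span ℤ (Set.range v) = ⊤ := by
    refine Submodule.eq_top_iff'.mpr fun w => ?_
    obtain ⟨x, hx⟩ := (e.surjective.comp (QuotientGroup.mk'_surjective _)) (.ofAdd w)
    rw [← toAdd_ofAdd w, ← hx]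
    refine Subgroup.closure_induction
      (p := fun x _ => (ρ x).toAdd ∈ Submodule.span ℤ (Set.range v))
      (by rintro _ ⟨i, rfl⟩; exact Submodule.subset_span ⟨i, rfl⟩) ?_ ?_ ?_
      (hg ▸ Subgroup.mem_top x)
    · simp
    · intro x y _ _ hx hy; simpa using add_mem hx hy
    · intro x _ hx; simpa using neg_mem hx
  have hsurj : Function.Surjective (Fintype.linearCombination ℤ v) := by
    rw [← LinearMap.range_eq_top, Fintype.range_linearCombination, hspan]
  let E := LinearEquiv.ofBijective _
    ⟨IsNoetherian.injective_of_surjective_endomorphism _ hsurj, hsurj⟩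
  refine ⟨(AddMonoidHom.toMultiplicative E.symm.toAddMonoidHom).comp ρ, fun i => ?_⟩
  have hE : E (Pi.single i 1) = v i := by
    show Fintype.linearCombination ℤ v (Pi.single i 1) = v i
    rw [Fintype.linearCombination_apply_single, one_smul]
  exact congrArg Multiplicative.ofAdd (E.symm_apply_eq.mpr hE.symm)

theorem exists_monoidHom_apply_eq_of_abelianization_mulEquiv {G M ι : Type*} [Group G]
    [Group M] [Fintype ι] [DecidableEq ι] (g : ι → G) (hg : Subgroup.closure (Set.range g) = ⊤)
    (e : Abelianization G ≃* Multiplicative (ι → ℤ))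
    (h : ι → M) (hcomm : Pairwise fun i j => Commute (h i) (h j)) :
    ∃ ψ : G →* M, ∀ i, ψ (g i) = h i := by
  obtain ⟨κ, hκ⟩ := exists_monoidHom_apply_eq_ofAdd_single g hg e
  obtain ⟨Ψ, hΨ⟩ := exists_monoidHom_ofAdd_single h hcomm
  exact ⟨Ψ.comp κ, fun i => by rw [MonoidHom.comp_apply, hκ, hΨ]⟩

theorem Subgroup.exists_closure_range_eq_top_of_eq_closure {Γ ι : Type*} [Group Γ]
    {G : Subgroup Γ} {g : ι → Γ} (hG : G = Subgroup.closure (Set.range g)) :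
    ∃ g' : ι → G, Subgroup.closure (Set.range g') = ⊤ := by
  subst hG
  refine ⟨fun i => ⟨g i, Subgroup.subset_closure ⟨i, rfl⟩⟩, ?_⟩
  convert Subgroup.closure_preimage_eq_top (Set.range g)
  ext x
  simp [Subtype.ext_iff]

/-- The map `x ↦ x * ψ x` embeds `G` into the commutator subgroup of `H`. -/
theorem exists_injective_monoidHom_commutator {Γ ι : Type*} [Group Γ] {G H K : Subgroup Γ}
    (hGH : G ≤ H) (hKH : K ≤ H) (hKG : K ≤ Subgroup.centralizer G) (hGK : Disjoint G K)
    (g : ι → G) (hg : Subgroup.closure (Set.range g) = ⊤) (ψ : G →* K)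
    (hψ : ∀ i, ∃ u ∈ H, ∃ v ∈ H, (g i : Γ) * ψ (g i) = ⁅u, v⁆) :
    ∃ φ : G →* commutator H, Function.Injective φ := by
  let φ₀ : G →* Γ := (G.subtype.noncommCoprod (K.subtype.comp ψ) fun x y =>
      Subgroup.mem_centralizer_iff.mp (hKG (ψ y).2) x x.2).comp
    ((MonoidHom.id G).prod (MonoidHom.id G))
  let φ₁ : G →* H := φ₀.codRestrict H fun x => mul_mem (hGH x.2) (hKH (ψ x).2)
  have hcomm : Subgroup.closure (Set.range g) ≤ (commutator H).comap φ₁ := by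
    rw [Subgroup.closure_le]
    rintro _ ⟨i, rfl⟩
    obtain ⟨u, hu, v, hv, huv⟩ := hψ i
    have hφ : φ₁ (g i) = ⁅(⟨u, hu⟩ : H), ⟨v, hv⟩⁆ := Subtype.ext huv
    rw [SetLike.mem_coe, Subgroup.mem_comap, hφ]
    exact Subgroup.commutator_mem_commutator (Subgroup.mem_top _) (Subgroup.mem_top _)
  rw [hg] at hcomm
  refine ⟨φ₁.codRestrict _ fun x => hcomm (Subgroup.mem_top x),
    (injective_iff_map_eq_one _).mpr fun x hx => ?_⟩
  have hx' : (x : Γ) * ψ x = 1 := congrArg (fun y : commutator H => ((y : H) : Γ)) hx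
  have hxK : (x : Γ) ∈ K := by
    rw [eq_inv_of_mul_eq_one_left hx']
    exact inv_mem (ψ x).2
  exact Subtype.ext (Subgroup.disjoint_def.mp hGK x.2 hxK)

theorem pairwise_disjoint_Ioo_natCast (α : Type*) [Ring α] [PartialOrder α] [IsOrderedRing α] :
    Pairwise fun i j : ℕ => Disjoint (Set.Ioo (i : α) (i + 1)) (Set.Ioo (j : α) (j + 1)) :=
  fun i j hij => by
  simpa only [Function.onFun, Int.cast_natCast] using
    Set.pairwise_disjoint_Ioo_intCast α (Nat.cast_injective.ne hij : (i : ℤ) ≠ j)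

namespace HomeoR

theorem supp_subset_suppG {G : Subgroup HomeoR} {f : HomeoR} (hf : f ∈ G) : supp f ⊆ suppG G :=
  Set.subset_biUnion_of_mem hf

theorem supp_eq_empty_iff {f : HomeoR} : supp f = ∅ ↔ f = 1 := by
  simp only [supp, Set.eq_empty_iff_forall_notMem, Set.mem_ofPred_eq, not_not]
  exact ⟨fun h => RelIso.ext h, fun h x => h ▸ rfl⟩

theorem mem_fixingSubgroup_iff_disjoint_supp {f : HomeoR} {s : Set ℝ} :
    f ∈ fixingSubgroup HomeoR s ↔ Disjoint (supp f) s := by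
  simp only [mem_fixingSubgroup_iff, RelIso.smul_def, Set.disjoint_left, supp,
    Set.mem_ofPred_eq, not_imp_comm, not_not]

theorem disjoint_fixingSubgroup_of_suppG_subset {G : Subgroup HomeoR} {s : Set ℝ}
    (h : suppG G ⊆ s) : Disjoint G (fixingSubgroup HomeoR s) :=
  Subgroup.disjoint_def.mpr fun hG hfix => supp_eq_empty_iff.mp <|
    (mem_fixingSubgroup_iff_disjoint_supp.mp hfix).eq_bot_of_le
      ((supp_subset_suppG hG).trans h)

theorem commute_of_disjoint_supp {f g : HomeoR} (h : Disjoint (supp f) (supp g)) :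
    Commute f g := by
  have hperm : Commute f.toEquiv g.toEquiv := Equiv.Perm.Disjoint.commute fun x => by
    by_contra! hx
    exact Set.disjoint_left.mp h hx.1 hx.2
  exact RelIso.ext fun x => Equiv.ext_iff.mp hperm x

theorem supp_conj (c f : HomeoR) : supp (c * f * c⁻¹) = c '' supp f := by
  ext x
  rw [OrderIso.image_eq_preimage_symm]
  show c (f (c.symm x)) ≠ x ↔ f (c.symm x) ≠ c.symm x
  rw [ne_eq, ← OrderIso.eq_symm_apply]

theorem translation_pow_apply {a : HomeoR} (ha : ∀ x, a x = x + 1) (m : ℕ) (x : ℝ) :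
    (a ^ m) x = x + m := by
  induction m with
  | zero => simp
  | succ k ih =>
    rw [pow_succ', Nat.cast_succ]
    show a ((a ^ k) x) = _
    rw [ih, ha, add_assoc]

theorem supp_translation_conj_subset {a f : HomeoR} (ha : ∀ x, a x = x + 1)
    (hf : supp f ⊆ Set.Ioo 0 1) (m : ℕ) :
    supp (a ^ m * f * (a ^ m)⁻¹) ⊆ Set.Ioo (m : ℝ) (m + 1) := by
  rw [supp_conj]
  rintro _ ⟨y, hy, rfl⟩
  obtain ⟨hy₀, hy₁⟩ := hf hy
  rw [translation_pow_apply ha]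
  constructor <;> linarith

theorem disjoint_supp_translation_conj_Iic {a f : HomeoR} (ha : ∀ x, a x = x + 1)
    (hf : supp f ⊆ Set.Ioo 0 1) {m : ℕ} (hm : 1 ≤ m) :
    Disjoint (supp (a ^ m * f * (a ^ m)⁻¹)) (Set.Iic 1) :=
  (Set.Iic_disjoint_Ioi (by exact_mod_cast hm)).symm.mono_left
    ((supp_translation_conj_subset ha hf m).trans Set.Ioo_subset_Ioi_self)

theorem translation_conj_mem_centralizer_inf_fixingSubgroup {a f : HomeoR}
    (ha : ∀ x, a x = x + 1) {G : Subgroup HomeoR} (hG : suppG G ⊆ Set.Ioo 0 1)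
    (hf : supp f ⊆ Set.Ioo 0 1) {m : ℕ} (hm : 1 ≤ m) :
    a ^ m * f * (a ^ m)⁻¹ ∈
      Subgroup.centralizer (G : Set HomeoR) ⊓ fixingSubgroup HomeoR (Set.Iic (1 : ℝ)) := by
  have hdisj := disjoint_supp_translation_conj_Iic ha hf hm
  refine Subgroup.mem_inf.mpr ⟨Subgroup.mem_centralizer_iff.mpr fun y hy => ?_,
    mem_fixingSubgroup_iff_disjoint_supp.mpr hdisj⟩
  exact (commute_of_disjoint_supp (hdisj.symm.mono_left (((supp_subset_suppG hy).trans hG).trans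
    (Set.Ioo_subset_Ioc_self.trans Set.Ioc_subset_Iic_self)))).eq

theorem commute_translation_conj {a f f' : HomeoR} (ha : ∀ x, a x = x + 1)
    (hf : supp f ⊆ Set.Ioo 0 1) (hf' : supp f' ⊆ Set.Ioo 0 1) {m m' : ℕ} (hmm' : m ≠ m') :
    Commute (a ^ m * f * (a ^ m)⁻¹) (a ^ m' * f' * (a ^ m')⁻¹) :=
  commute_of_disjoint_supp <| (pairwise_disjoint_Ioo_natCast ℝ hmm').mono
    (supp_translation_conj_subset ha hf m) (supp_translation_conj_subset ha hf' m')

end HomeoR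

theorem stmt11_general (a : HomeoR) (ha : ∀ x : ℝ, a x = x + 1)
    {n : ℕ} (g : Fin n → HomeoR)
    (G : Subgroup HomeoR) (hG : G = Subgroup.closure (Set.range g))
    (hsupp : suppG G ⊆ Set.Ioo (0 : ℝ) 1)
    (hab : Nonempty (Abelianization ↥G ≃* Multiplicative (Fin n → ℤ))) :
    ∃ φ : ↥G →* ↥(commutator ↥(Subgroup.closure ((G : Set HomeoR) ∪ {a}))),
      Function.Injective φ := by
  obtain ⟨e⟩ := hab
  obtain ⟨g', hg'⟩ := Subgroup.exists_closure_range_eq_top_of_eq_closure hG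
  set H := Subgroup.closure ((G : Set HomeoR) ∪ {a})
  have hGH : G ≤ H := fun x hx => Subgroup.subset_closure (Or.inl hx)
  have haH : a ∈ H := Subgroup.subset_closure (Or.inr rfl)
  have hsupp_inv (i : Fin n) : supp (g' i : HomeoR)⁻¹ ⊆ Set.Ioo 0 1 :=
    (HomeoR.supp_subset_suppG (inv_mem (g' i).2)).trans hsupp
  -- `h i` is conjugate to `(g' i)⁻¹`, so `g' i * h i` is a commutator in `H`.
  let h (i : Fin n) : HomeoR := a ^ ((i : ℕ) + 1) * (g' i : HomeoR)⁻¹ * (a ^ ((i : ℕ) + 1))⁻¹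
  let K := Subgroup.centralizer (G : Set HomeoR) ⊓ fixingSubgroup HomeoR (Set.Iic (1 : ℝ)) ⊓ H
  have hhK (i : Fin n) : h i ∈ K := Subgroup.mem_inf.mpr
    ⟨HomeoR.translation_conj_mem_centralizer_inf_fixingSubgroup ha hsupp (hsupp_inv i)
      (Nat.le_add_left 1 _),
      mul_mem (mul_mem (pow_mem haH _) (inv_mem (hGH (g' i).2))) (inv_mem (pow_mem haH _))⟩
  obtain ⟨ψ, hψ⟩ := exists_monoidHom_apply_eq_of_abelianization_mulEquiv g' hg' e
    (fun i => (⟨h i, hhK i⟩ : K)) fun i j hij => Subtype.ext <|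
      HomeoR.commute_translation_conj ha (hsupp_inv i) (hsupp_inv j) (by omega)
  refine exists_injective_monoidHom_commutator hGH inf_le_right (inf_le_left.trans inf_le_left)
    ((HomeoR.disjoint_fixingSubgroup_of_suppG_subset
      (hsupp.trans (Set.Ioo_subset_Ioc_self.trans Set.Ioc_subset_Iic_self))).mono_right
      (inf_le_left.trans inf_le_right)) g' hg' ψ fun i =>
    ⟨g' i, hGH (g' i).2, a ^ ((i : ℕ) + 1), pow_mem haH _, ?_⟩
  rw [hψ i]
  simp [h, commutatorElement_def, mul_assoc]

/-- Let `a(x) = x + 1` and `G = ⟨g₁,…,gₙ⟩ ≤ Homeo⁺(0,1)` with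
`G/G' ≅ ℤⁿ`. Then `G` embeds into the commutator subgroup of `⟨G, a⟩`. -/
theorem stmt11 (a : HomeoR) (ha : ∀ x : ℝ, a x = x + 1)
    {n : ℕ} (hn : 1 ≤ n) (g : Fin n → HomeoR)
    (G : Subgroup HomeoR) (hG : G = Subgroup.closure (Set.range g))
    (hsupp : suppG G ⊆ Set.Ioo (0 : ℝ) 1)
    (hab : Nonempty (Abelianization ↥G ≃* Multiplicative (Fin n → ℤ))) :
    ∃ φ : ↥G →* ↥(commutator ↥(Subgroup.closure ((G : Set HomeoR) ∪ {a}))),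
      Function.Injective φ :=
  stmt11_general a ha g G hG hsupp hab
end
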